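/- arXiv:1702.03511 — 6 statements merged into one kernel-verified Lean document; each statement's English description precedes it below -/
import Mathlib

section
/- For every closed PGA term t, there exists a closed PGA term t' in first canonical form (i.e., t' is either a repetition-free closed term s, or of the form s ; s'^ω with s, s' repetition-free closed terms) such that t = t' is derivable from the axioms PGA1–PGA4 of instruction sequence congruence. -/
/-!
Induction on the term: up to derivability, first canonical forms are closed under `;` and `^ω`.
A term `s ; x^ω` absorbs anything appended to it (PGA1, PGA3); every `a` satisfies
`a^ω = a ; a^ω` (PGA2 with `n = 1`, then PGA4); and `(s ; x^ω)^ω = s ; (x^ω ; s)^ω = s ; (x^ω)^ω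
= s ; x^ω` by PGA4, PGA3 and the unfolding of `(x^ω)^ω`.
-/

/-- PGA terms over a set `I` of primitive instructions. -/
inductive PGATerm (I : Type) where
  | ins : I → PGATerm I
  | seq : PGATerm I → PGATerm I → PGATerm I
  | rep : PGATerm I → PGATerm I

/-- `pw t n` is `t^{n+1}`: `t^1 = t`, `t^{n+1} = t ; t^n`. -/
def PGATerm.pw {I : Type} (t : PGATerm I) : ℕ → PGATerm I
  | 0 => t
  | n + 1 => .seq t (t.pw n)

/-- A term is repetition-free if `^ω` does not occur in it. -/
inductive PGATerm.RepFree {I : Type} : PGATerm I → Prop where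
  | ins (u : I) : RepFree (.ins u)
  | seq {s t} : RepFree s → RepFree t → RepFree (.seq s t)

/-- First canonical form: a repetition-free term `s`, or `s ; s'^ω` with
`s`, `s'` repetition-free. -/
def PGATerm.FirstCanonical {I : Type} (t : PGATerm I) : Prop :=
  t.RepFree ∨ ∃ s s' : PGATerm I, t = .seq s (.rep s') ∧ s.RepFree ∧ s'.RepFree

/-- Equational derivability from the instruction sequence congruence axioms
PGA1–PGA4. -/
inductive PGADeriv {I : Type} : PGATerm I → PGATerm I → Prop where
  | refl (t) : PGADeriv t t
  | symm {t t'} : PGADeriv t t' → PGADeriv t' t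
  | trans {t t' t''} : PGADeriv t t' → PGADeriv t' t'' → PGADeriv t t''
  | seqCongr {s s' t t'} : PGADeriv s s' → PGADeriv t t' →
      PGADeriv (.seq s t) (.seq s' t')
  | repCongr {t t'} : PGADeriv t t' → PGADeriv (.rep t) (.rep t')
  | pga1 (x y z) : PGADeriv (.seq (.seq x y) z) (.seq x (.seq y z))
  | pga2 (x) (n : ℕ) : PGADeriv (.rep (x.pw n)) (.rep x)
  | pga3 (x y) : PGADeriv (.seq (.rep x) y) (.rep x)
  | pga4 (x y) : PGADeriv (.rep (.seq x y)) (.seq x (.rep (.seq y x)))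

namespace PGADeriv

variable {I : Type}

instance : Trans (@PGADeriv I) PGADeriv PGADeriv := ⟨.trans⟩

theorem rep_unfold (x : PGATerm I) : PGADeriv (.rep x) (.seq x (.rep x)) :=
  calc PGADeriv (.rep x) (.rep (x.pw 1)) := .symm (.pga2 x 1)
    PGADeriv _ (.seq x (.rep (.seq x x))) := .pga4 x x
    PGADeriv _ (.seq x (.rep x)) := .seqCongr (.refl x) (.pga2 x 1)

theorem rep_rep (x : PGATerm I) : PGADeriv (.rep (.rep x)) (.rep x) :=
  .trans (rep_unfold (.rep x)) (.pga3 x _)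

theorem seq_rep_seq (s x y : PGATerm I) :
    PGADeriv (.seq (.seq s (.rep x)) y) (.seq s (.rep x)) :=
  .trans (.pga1 s (.rep x) y) (.seqCongr (.refl s) (.pga3 x y))

theorem rep_seq_rep (s x : PGATerm I) :
    PGADeriv (.rep (.seq s (.rep x))) (.seq s (.rep x)) :=
  calc PGADeriv (.rep (.seq s (.rep x))) (.seq s (.rep (.seq (.rep x) s))) := .pga4 s (.rep x)
    PGADeriv _ (.seq s (.rep (.rep x))) := .seqCongr (.refl s) (.repCongr (.pga3 x s))
    PGADeriv _ (.seq s (.rep x)) := .seqCongr (.refl s) (rep_rep x)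

end PGADeriv

namespace PGATerm.FirstCanonical

variable {I : Type} {a b : PGATerm I}

theorem exists_deriv_seq (ha : a.FirstCanonical) (hb : b.FirstCanonical) :
    ∃ t : PGATerm I, t.FirstCanonical ∧ PGADeriv (.seq a b) t := by
  rcases ha with ha | ⟨s, x, rfl, hs, hx⟩
  · rcases hb with hb | ⟨u, x, rfl, hu, hx⟩
    · exact ⟨.seq a b, .inl (.seq ha hb), .refl _⟩
    · exact ⟨.seq (.seq a u) (.rep x), .inr ⟨_, _, rfl, .seq ha hu, hx⟩, .symm (.pga1 a u _)⟩
  · exact ⟨.seq s (.rep x), .inr ⟨_, _, rfl, hs, hx⟩, .seq_rep_seq s x b⟩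

theorem exists_deriv_rep (ha : a.FirstCanonical) :
    ∃ t : PGATerm I, t.FirstCanonical ∧ PGADeriv (.rep a) t := by
  rcases ha with ha | ⟨s, x, rfl, hs, hx⟩
  · exact ⟨.seq a (.rep a), .inr ⟨_, _, rfl, ha, ha⟩, .rep_unfold a⟩
  · exact ⟨.seq s (.rep x), .inr ⟨_, _, rfl, hs, hx⟩, .rep_seq_rep s x⟩

end PGATerm.FirstCanonical

/-- Every closed PGA term is provably equal, from PGA1–PGA4, to a term in
first canonical form. -/
theorem exists_first_canonical_form {I : Type} (t : PGATerm I) :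
    ∃ t' : PGATerm I, t'.FirstCanonical ∧ PGADeriv t t' := by
  induction t with
  | ins u => exact ⟨.ins u, .inl (.ins u), .refl _⟩
  | seq a b iha ihb =>
    obtain ⟨a', ha', da⟩ := iha
    obtain ⟨b', hb', db⟩ := ihb
    obtain ⟨t', ht', dt⟩ := ha'.exists_deriv_seq hb'
    exact ⟨t', ht', .trans (.seqCongr da db) dt⟩
  | rep a iha =>
    obtain ⟨a', ha', da⟩ := iha
    obtain ⟨t', ht', dt⟩ := ha'.exists_deriv_rep
    exact ⟨t', ht', .trans (.repCongr da) dt⟩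
end

section
/- For all closed PGA terms t and t', if t = t' is derivable from the axioms PGA1–PGA4 of instruction sequence congruence, then t and t' denote the same infinite or finite instruction sequence under the standard interpretation mapping each closed term to the sequence of primitive instructions it represents. -/
/-- Finite or infinite sequences over `I`. -/
def ISeq (I : Type) : Type := List I ⊕ (ℕ → I)

/-- Concatenation of sequences; concatenation onto an infinite sequence
leaves it unchanged. -/
def ISeq.cat {I : Type} : ISeq I → ISeq I → ISeq I
  | .inl l, .inl l' => .inl (l ++ l')
  | .inl l, .inr f =>
      .inr (fun n => if h : n < l.length then l.get ⟨n, h⟩ else f (n - l.length))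
  | .inr f, _ => .inr f

/-- Infinite repetition of a sequence; an infinite sequence repeated is
itself. -/
def ISeq.rep {I : Type} : ISeq I → ISeq I
  | .inl [] => .inl []
  | .inl (a :: l) =>
      .inr (fun n => (a :: l).get ⟨n % (a :: l).length, Nat.mod_lt _ (by simp)⟩)
  | .inr f => .inr f

/-- The standard interpretation of closed PGA terms as instruction
sequences. -/
def PGATerm.den {I : Type} : PGATerm I → ISeq I
  | .ins u => .inl [u]
  | .seq t t' => ISeq.cat t.den t'.den
  | .rep t => ISeq.rep t.den

section Aux

variable {I : Type}

lemma getElem_idx_congr (L : List I) {i j : ℕ} (h : i < L.length) (e : i = j) :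
    L[i] = L[j]'(e ▸ h) := by subst e; rfl

lemma den_ne_nil (t : PGATerm I) : t.den ≠ Sum.inl ([] : List I) := by
  induction t with
  | ins u => exact fun h => List.cons_ne_nil _ _ (Sum.inl.inj h)
  | seq a b iha ihb =>
    show ISeq.cat a.den b.den ≠ _
    rcases ha : a.den with (_ | ⟨x, l⟩) | f
    · exact absurd ha iha
    · rcases hb : b.den with l' | g
      · exact fun h => List.cons_ne_nil _ _ (Sum.inl.inj h)
      · simp [ISeq.cat]; exact Sum.inr_ne_inl
    · simp [ISeq.cat]; exact Sum.inr_ne_inl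
  | rep a ih =>
    show ISeq.rep a.den ≠ _
    rcases ha : a.den with (_ | ⟨x, l⟩) | f
    · exact absurd ha ih
    · simp [ISeq.rep]; exact Sum.inr_ne_inl
    · simp [ISeq.rep]; exact Sum.inr_ne_inl

lemma rep_den_inr (t : PGATerm I) : ∃ f, (PGATerm.rep t).den = Sum.inr f := by
  show ∃ f, ISeq.rep t.den = _
  rcases h : t.den with (_ | ⟨x, l⟩) | f
  · exact absurd h (den_ne_nil t)
  · exact ⟨_, rfl⟩
  · exact ⟨f, rfl⟩

lemma cat_assoc (a b c : ISeq I) : (a.cat b).cat c = a.cat (b.cat c) := by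
  rcases a with l | f
  · rcases b with l' | g
    · rcases c with l'' | h
      · simp [ISeq.cat, List.append_assoc]; rfl
      · simp only [ISeq.cat, List.get_eq_getElem]
        congr 1
        funext n
        split_ifs with h1 h2 h2 h3 h3
        · exact List.getElem_append_left h2
        · exact List.getElem_append_right (by omega)
        · simp only [List.length_append] at h1; omega
        · simp only [List.length_append] at h1; omega
        · simp only [List.length_append] at h1; omega
        · congr 1
          simp only [List.length_append]
          omega
    · rcases c with l'' | h <;> rfl
  · rfl

/-- `repL L n` is `n+1` copies of `L` concatenated. -/
def repL (L : List I) : ℕ → List I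
  | 0 => L
  | n + 1 => L ++ repL L n

lemma repL_length (L : List I) (n : ℕ) : (repL L n).length = (n + 1) * L.length := by
  induction n with
  | zero => simp [repL]
  | succ n ih => simp [repL, ih]; ring

lemma repL_getElem (L : List I) (hL : 0 < L.length) (n j : ℕ)
    (h : j < (repL L n).length) :
    (repL L n)[j] = L[j % L.length]'(Nat.mod_lt _ hL) := by
  induction n generalizing j with
  | zero =>
    simp only [repL] at h ⊢
    exact getElem_idx_congr L h (Nat.mod_eq_of_lt h).symm
  | succ n ih =>
    simp only [repL] at h ⊢
    rcases lt_or_ge j L.length with h1 | h1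
    · rw [List.getElem_append_left h1]
      exact getElem_idx_congr L h1 (Nat.mod_eq_of_lt h1).symm
    · rw [List.getElem_append_right h1, ih _ (by simp only [repL, List.length_append] at h; omega)]
      apply getElem_idx_congr
      conv_rhs => rw [show j = L.length + (j - L.length) by omega]
      rw [Nat.add_mod_left]

lemma pw_den_inr (x : PGATerm I) (f : ℕ → I) (hx : x.den = Sum.inr f) (n : ℕ) :
    (x.pw n).den = Sum.inr f := by
  induction n with
  | zero => exact hx
  | succ n ih =>
    show ISeq.cat x.den (x.pw n).den = _
    rw [hx]; rfl

lemma pw_den_inl (x : PGATerm I) (L : List I) (hx : x.den = Sum.inl L) (n : ℕ) :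
    (x.pw n).den = Sum.inl (repL L n) := by
  induction n with
  | zero => exact hx
  | succ n ih =>
    show ISeq.cat x.den (x.pw n).den = _
    rw [hx, ih]; rfl

lemma rep_inl_eq_of_mod (A B : List I) (hA : A ≠ []) (hB : B ≠ [])
    (hd : A.length ∣ B.length)
    (hAB : ∀ j (h : j < B.length),
      B[j] = A[j % A.length]'(Nat.mod_lt _ (List.length_pos_iff.mpr hA))) :
    ISeq.rep (Sum.inl B) = ISeq.rep (Sum.inl A) := by
  rcases A with _ | ⟨a, l⟩; · exact absurd rfl hA
  rcases B with _ | ⟨b, m⟩; · exact absurd rfl hB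
  show Sum.inr _ = Sum.inr _
  congr 1
  funext k
  simp only [List.get_eq_getElem]
  rw [hAB _ (Nat.mod_lt _ (by simp))]
  exact getElem_idx_congr _ _ (Nat.mod_mod_of_dvd k hd)

lemma rep_inl' (L : List I) (hL : L ≠ []) (d : I) :
    ISeq.rep (Sum.inl L) = Sum.inr (fun n => L.getD (n % L.length) d) := by
  rcases L with _ | ⟨a, l⟩
  · exact absurd rfl hL
  show Sum.inr _ = Sum.inr _
  congr 1
  funext n
  rw [List.get_eq_getElem, List.getD_eq_getElem _ _ (Nat.mod_lt _ (by simp))]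

lemma cat_inl_inr (L : List I) (f : ℕ → I) (d : I) :
    ISeq.cat (Sum.inl L) (Sum.inr f) =
      Sum.inr (fun n => if n < L.length then L.getD n d else f (n - L.length)) := by
  show Sum.inr _ = Sum.inr _
  congr 1
  funext n
  split_ifs with h
  · rw [List.get_eq_getElem, List.getD_eq_getElem _ _ h]
  · rfl

lemma key_mod (A B : List I) (d : I) (hA : 0 < A.length) (n : ℕ) :
    (A ++ B).getD (n % (A ++ B).length) d =
      if n < A.length then A.getD n d
      else (B ++ A).getD ((n - A.length) % (B ++ A).length) d := by
  have hs0 : 0 < (A ++ B).length := by simp; omega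
  have hlen : (B ++ A).length = (A ++ B).length := by simp; omega
  set s := (A ++ B).length with hs
  have hsAB : s = A.length + B.length := by simp [hs]
  rw [hlen]
  split_ifs with h1
  · rw [Nat.mod_eq_of_lt (by omega), List.getD_append _ _ _ _ h1]
  · push_neg at h1
    set r := (n - A.length) % s with hr
    have hrs : r < s := Nat.mod_lt _ hs0
    have hns : n % s = (A.length + r) % s := by
      conv_lhs => rw [show n = A.length + (n - A.length) by omega]
      rw [hr, Nat.add_mod, Nat.add_mod A.length ((n - A.length) % s),
        Nat.mod_mod_of_dvd _ dvd_rfl]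
    rcases lt_or_ge (A.length + r) s with h4 | h4
    · have hrB : r < B.length := by omega
      rw [hns, Nat.mod_eq_of_lt h4,
        List.getD_append_right _ _ _ _ (by omega), Nat.add_sub_cancel_left,
        List.getD_append _ _ _ _ hrB]
    · have hmod : (A.length + r) % s = r - B.length := by
        rw [show A.length + r = s + (A.length + r - s) by omega, Nat.add_mod_left,
          Nat.mod_eq_of_lt (by omega)]
        omega
      rw [hns, hmod, List.getD_append _ _ _ _ (by omega),
        List.getD_append_right _ _ _ _ (by omega)]

end Aux

/-- Soundness of PGA1–PGA4 for instruction sequence congruence: derivably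
equal closed terms denote the same instruction sequence. -/
theorem pga_isc_sound {I : Type} {t t' : PGATerm I}
    (h : PGADeriv t t') : t.den = t'.den := by
  induction h with
  | refl t => rfl
  | symm _ ih => exact ih.symm
  | trans _ _ ih1 ih2 => exact ih1.trans ih2
  | seqCongr _ _ ih1 ih2 => show ISeq.cat _ _ = ISeq.cat _ _; rw [ih1, ih2]
  | repCongr _ ih => show ISeq.rep _ = ISeq.rep _; rw [ih]
  | pga1 x y z => exact cat_assoc x.den y.den z.den
  | pga2 x n =>
    show ISeq.rep (x.pw n).den = ISeq.rep x.den
    rcases hx : x.den with L | f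
    · have hL : L ≠ [] := fun h => den_ne_nil x (h ▸ hx)
      rw [pw_den_inl x L hx n]
      apply rep_inl_eq_of_mod L (repL L n) hL
      · rcases L with _ | ⟨a, l⟩
        · exact absurd rfl hL
        · cases n <;> simp [repL]
      · rw [repL_length]; exact dvd_mul_left _ _
      · intro j h
        exact repL_getElem L (List.length_pos_iff.mpr hL) n j h
    · rw [pw_den_inr x f hx n]
  | pga3 x y =>
    show ISeq.cat (PGATerm.rep x).den y.den = (PGATerm.rep x).den
    obtain ⟨f, hf⟩ := rep_den_inr x
    rw [hf]; rfl
  | pga4 x y =>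
    show ISeq.rep (ISeq.cat x.den y.den)
        = ISeq.cat x.den (ISeq.rep (ISeq.cat y.den x.den))
    rcases hx : x.den with (_ | ⟨a, l⟩) | f
    · exact absurd hx (den_ne_nil x)
    · rcases hy : y.den with B | g
      · -- both finite
        show ISeq.rep (ISeq.cat (Sum.inl (a :: l)) (Sum.inl B))
            = ISeq.cat (Sum.inl (a :: l)) (ISeq.rep (ISeq.cat (Sum.inl B) (Sum.inl (a :: l))))
        rw [show ISeq.cat (Sum.inl (a :: l)) (Sum.inl B) = Sum.inl ((a :: l) ++ B) from rfl,
          show ISeq.cat (Sum.inl B) (Sum.inl (a :: l)) = Sum.inl (B ++ (a :: l)) from rfl,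
          rep_inl' ((a :: l) ++ B) (by simp) a, rep_inl' (B ++ (a :: l)) (by simp) a,
          cat_inl_inr (a :: l) _ a]
        congr 1
        funext n
        exact key_mod (a :: l) B a (by simp) n
      · -- x finite, y infinite
        show ISeq.rep (ISeq.cat (Sum.inl (a :: l)) (Sum.inr g))
            = ISeq.cat (Sum.inl (a :: l)) (ISeq.rep (ISeq.cat (Sum.inr g) (Sum.inl (a :: l))))
        rfl
    · rfl
end

section
/- Thread extraction of a finite instruction sequence terminates: for every closed repetition-free PGA term t, rewriting ⟨|t|⟩ using the thread-extraction rules TE1–TE13 (oriented left to right) yields, after finitely many steps, a closed BTA term (built from inaction D, termination S, and postconditional composition). -/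
/-- Primitive instructions over a set `A` of basic instructions: plain
basic instructions, positive and negative tests, forward jumps, and the
termination instruction. -/
inductive PInstr (A : Type) where
  | basic : A → PInstr A
  | ptst : A → PInstr A
  | ntst : A → PInstr A
  | jmp : ℕ → PInstr A
  | halt : PInstr A

/-- Closed BTA terms over basic actions `A`: inaction `D`, termination `S`,
and postconditional composition. -/
inductive BTA (A : Type) where
  | D : BTA A
  | S : BTA A
  | pcc : BTA A → A → BTA A → BTA A

open PInstr BTA

/-- Thread extraction (rules TE1–TE13) as a relation between non-empty
finite instruction sequences (lists of primitive instructions) and closed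
BTA terms.  `a ∘ x` is `x ◁ a ▷ x`, i.e. `pcc x a x`. -/
inductive Extract {A : Type} : List (PInstr A) → BTA A → Prop where
  | te1 (a : A) : Extract [basic a] (pcc D a D)
  | te2 (a : A) {X : List (PInstr A)} {x : BTA A} :
      X ≠ [] → Extract X x → Extract (basic a :: X) (pcc x a x)
  | te3 (a : A) : Extract [ptst a] (pcc D a D)
  | te4 (a : A) {X : List (PInstr A)} {x y : BTA A} :
      X ≠ [] → Extract X x → Extract (jmp 2 :: X) y →
      Extract (ptst a :: X) (pcc x a y)
  | te5 (a : A) : Extract [ntst a] (pcc D a D)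
  | te6 (a : A) {X : List (PInstr A)} {x y : BTA A} :
      X ≠ [] → Extract X x → Extract (jmp 2 :: X) y →
      Extract (ntst a :: X) (pcc y a x)
  | te7 (l : ℕ) : Extract [jmp l] D
  | te8 {X : List (PInstr A)} : X ≠ [] → Extract (jmp 0 :: X) D
  | te9 {X : List (PInstr A)} {x : BTA A} :
      X ≠ [] → Extract X x → Extract (jmp 1 :: X) x
  | te10 (l : ℕ) (u : PInstr A) : Extract [jmp (l + 2), u] D
  | te11 (l : ℕ) (u : PInstr A) {X : List (PInstr A)} {x : BTA A} :
      X ≠ [] → Extract (jmp (l + 1) :: X) x →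
      Extract (jmp (l + 2) :: u :: X) x
  | te12 : Extract [(halt : PInstr A)] S
  | te13 {X : List (PInstr A)} : X ≠ [] → Extract (halt :: X) S

def PInstr.testCost {A : Type} : PInstr A → ℕ
  | ptst _ | ntst _ => 1
  | _ => 0

theorem PInstr.testCost_le_one {A : Type} (u : PInstr A) : u.testCost ≤ 1 := by
  cases u <;> simp [testCost]

theorem Extract.exists_cons {A : Type} : ∀ (u : PInstr A) (X : List (PInstr A)),
    ∃ b : BTA A, Extract (u :: X) b
  | basic a, [] => ⟨_, .te1 a⟩
  | basic a, v :: Y =>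
    have ⟨_, hx⟩ := exists_cons v Y
    ⟨_, .te2 a (List.cons_ne_nil _ _) hx⟩
  | ptst a, [] => ⟨_, .te3 a⟩
  | ptst a, v :: Y =>
    have ⟨_, hx⟩ := exists_cons v Y
    have ⟨_, hy⟩ := exists_cons (jmp 2) (v :: Y)
    ⟨_, .te4 a (List.cons_ne_nil _ _) hx hy⟩
  | ntst a, [] => ⟨_, .te5 a⟩
  | ntst a, v :: Y =>
    have ⟨_, hx⟩ := exists_cons v Y
    have ⟨_, hy⟩ := exists_cons (jmp 2) (v :: Y)
    ⟨_, .te6 a (List.cons_ne_nil _ _) hx hy⟩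
  | jmp l, [] => ⟨_, .te7 l⟩
  | jmp 0, _ :: _ => ⟨_, .te8 (List.cons_ne_nil _ _)⟩
  | jmp 1, v :: Y =>
    have ⟨_, hx⟩ := exists_cons v Y
    ⟨_, .te9 (List.cons_ne_nil _ _) hx⟩
  | jmp (l + 2), [v] => ⟨_, .te10 l v⟩
  | jmp (l + 2), v :: w :: Z =>
    have ⟨_, hx⟩ := exists_cons (jmp (l + 1)) (w :: Z)
    ⟨_, .te11 l v (List.cons_ne_nil _ _) hx⟩
  | halt, [] => ⟨_, .te12⟩
  | halt, _ :: _ => ⟨_, .te13 (List.cons_ne_nil _ _)⟩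
-- Every rule shortens the tail, except that a test spawns `#2 :: X`, as long as the whole
-- sequence: a test at the head therefore counts for half a step more.
termination_by u X => 2 * X.length + u.testCost
decreasing_by
  all_goals
    have := PInstr.testCost_le_one v
    simp only [List.length_cons, PInstr.testCost] at this ⊢
    omega

/-- Thread extraction of a finite instruction sequence terminates: for
every non-empty finite instruction sequence, rewriting with TE1–TE13
yields (in finitely many steps) a closed BTA term. -/
theorem extract_total {A : Type} (t : List (PInstr A)) (h : t ≠ []) :
    ∃ b : BTA A, Extract t b := by
  obtain ⟨u, X, rfl⟩ := List.exists_cons_of_ne_nil h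
  exact Extract.exists_cons u X
end

section
/- For basic repetition-free PGA terms t and t' in third canonical form: if t and t' are behaviourally congruent then t is a single primitive instruction if and only if t' is, and t is of the form u ; s if and only if t' is of the form u' ; s'. Moreover, when t is a single primitive instruction, behavioural congruence of t and t' implies t and t' are syntactically identical. -/
open PInstr BTA

/-- A finite instruction sequence has chained jumps if some jump
instruction `#(n+1)` jumps onto another jump instruction. -/
def HasChainedJumps {A : Type} (t : List (PInstr A)) : Prop :=
  ∃ i n l : ℕ, t[i]? = some (jmp (n + 1)) ∧ t[i + n + 1]? = some (jmp l)

/-- Left-hand sides of the repetition-free control-flow simplification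
axioms PGA9–PGA25 (as finite instruction sequences). -/
inductive SimpLHS {A : Type} : List (PInstr A) → Prop where
  | p9 (a : A) : SimpLHS [ptst a, jmp 0, jmp 0]
  | p10 (a : A) : SimpLHS [ntst a, jmp 0, jmp 0]
  | p11 (a : A) : SimpLHS [ptst a, jmp 1]
  | p12 (a : A) : SimpLHS [ntst a, jmp 1]
  | p13 (a : A) (l : ℕ) : SimpLHS [ptst a, jmp (l + 2), jmp (l + 1)]
  | p14 (a : A) (l : ℕ) : SimpLHS [ntst a, jmp (l + 2), jmp (l + 1)]
  | p15 (a : A) : SimpLHS [ptst a, halt, halt]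
  | p16 (a : A) : SimpLHS [ntst a, halt, halt]
  | p19 (a : A) (us : List (PInstr A)) :
      SimpLHS ([jmp (us.length + 3), jmp (us.length + 3), jmp (us.length + 3)]
        ++ us ++ [ptst a])
  | p20 (a : A) (us : List (PInstr A)) :
      SimpLHS ([jmp (us.length + 3), jmp (us.length + 3), jmp (us.length + 3)]
        ++ us ++ [ntst a])
  | p21 (a : A) (us : List (PInstr A)) :
      SimpLHS ([jmp (us.length + 2), jmp (us.length + 2)] ++ us ++ [basic a])
  | p22 (a : A) (us vs : List (PInstr A)) :
      SimpLHS (jmp (us.length + vs.length + 4) :: us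
        ++ [ptst a, jmp (vs.length + 3), jmp (vs.length + 3)] ++ vs ++ [ptst a])
  | p23 (a : A) (us vs : List (PInstr A)) :
      SimpLHS (jmp (us.length + vs.length + 4) :: us
        ++ [ntst a, jmp (vs.length + 3), jmp (vs.length + 3)] ++ vs ++ [ntst a])
  | p24 (a : A) (us vs : List (PInstr A)) :
      SimpLHS (jmp (us.length + vs.length + 3) :: us
        ++ [basic a, jmp (vs.length + 2)] ++ vs ++ [basic a])
  | p25 (us : List (PInstr A)) :
      SimpLHS (jmp (us.length + 1) :: us ++ [halt])

/-- A finite instruction sequence has simplifiable control flow if it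
contains (up to associativity, i.e. as a contiguous segment) the left-hand
side of one of the axioms PGA9–PGA25. -/
def SimplifiableCF {A : Type} (t : List (PInstr A)) : Prop :=
  ∃ p m s : List (PInstr A), t = p ++ m ++ s ∧ SimpLHS m

/-- Third canonical form for finite (repetition-free) instruction
sequences: no chained jumps and no simplifiable control flow. -/
def ThirdCF {A : Type} (t : List (PInstr A)) : Prop :=
  ¬ HasChainedJumps t ∧ ¬ SimplifiableCF t

/-- Behavioural equivalence of finite instruction sequences: the threads
extracted from them coincide. -/
def BEqL {A : Type} (s s' : List (PInstr A)) : Prop :=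
  ∃ b : BTA A, Extract s b ∧ Extract s' b

/-- Behavioural congruence: `t ≅ t'` iff `#l ; t ; !ⁿ ≈ #l ; t' ; !ⁿ` for
all `l, n ∈ ℕ`. -/
def BCongL {A : Type} (t t' : List (PInstr A)) : Prop :=
  ∀ l n : ℕ, BEqL (jmp l :: (t ++ List.replicate n halt))
    (jmp l :: (t' ++ List.replicate n halt))

/-!
In `#(|t|+1) ; t ; !` the jump lands on the `!` and the thread is `S`, while in
`#(|t|+1) ; t' ; !` with `t'` shorter than `t` it jumps past the end and the thread is `D`;
so congruent sequences have the same length, which settles both shape equivalences.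
A single instruction `u` is recovered from the threads of `#1 ; u ; !ⁿ` for all `n`:
`n = 0` and `n = 1` tell the kinds of instruction apart, and a jump `#l` yields `S`
exactly when `1 ≤ l ≤ n`.
-/

theorem List.exists_cons_ne_nil_iff {α : Type*} (l : List α) :
    (∃ (a : α) (s : List α), l = a :: s ∧ s ≠ []) ↔ 2 ≤ l.length := by
  rcases l with _ | ⟨a, _ | ⟨b, s⟩⟩ <;> simp

section

variable {A : Type}

namespace Extract

theorem unique {X : List (PInstr A)} {b b' : BTA A}
    (h : Extract X b) (h' : Extract X b') : b = b' := by
  induction h generalizing b' <;> cases h' <;> simp_all <;> (try constructor) <;> solve_by_elim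

theorem jmp_zero (X : List (PInstr A)) : Extract (jmp 0 :: X) D := by
  by_cases hX : X = []
  · exact hX ▸ te7 0
  · exact te8 hX

theorem jmp_succ_of_length_le {X : List (PInstr A)} {m : ℕ} (hm : X.length ≤ m) :
    Extract (jmp (m + 1) :: X) D := by
  induction X generalizing m with
  | nil => exact te7 _
  | cons u X ih =>
    obtain ⟨m, rfl⟩ : ∃ k, m = k + 1 := ⟨m - 1, by simp at hm; omega⟩
    by_cases hX : X = []
    · exact hX ▸ te10 m u
    · exact te11 m u hX (ih (by simpa using hm))

theorem jmp_succ_of_lt {X : List (PInstr A)} {m : ℕ} {b : BTA A} (hm : m < X.length)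
    (h : Extract (X.drop m) b) : Extract (jmp (m + 1) :: X) b := by
  induction m generalizing X with
  | zero => exact te9 (List.ne_nil_of_length_pos hm) h
  | succ m ih =>
    rcases X with _ | ⟨u, X⟩
    · simp at hm
    · have hX : X ≠ [] := List.ne_nil_of_length_pos (by simp at hm; omega)
      exact te11 m u hX (ih (by simpa using hm) (by simpa using h))

theorem replicate_halt {n : ℕ} (hn : n ≠ 0) : Extract (List.replicate n (halt : PInstr A)) S := by
  obtain ⟨n, rfl⟩ := Nat.exists_eq_succ_of_ne_zero hn
  rcases n with _ | n
  · exact te12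
  · exact te13 (by simp)

theorem jmp_replicate_halt (l n : ℕ) :
    Extract (jmp l :: List.replicate n (halt : PInstr A)) (if 1 ≤ l ∧ l ≤ n then S else D) := by
  rcases l with _ | m
  · simpa using jmp_zero _
  split_ifs with hl
  · exact jmp_succ_of_lt (by simp; omega) (by simpa using replicate_halt (by omega))
  · exact jmp_succ_of_length_le (by simp; omega)

end Extract

def singleThread : PInstr A → ℕ → BTA A
  | basic a, 0 => pcc D a D
  | basic a, _ + 1 => pcc S a S
  | ptst a, 0 => pcc D a D
  | ptst a, 1 => pcc S a D
  | ptst a, _ + 2 => pcc S a S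
  | ntst a, 0 => pcc D a D
  | ntst a, 1 => pcc D a S
  | ntst a, _ + 2 => pcc S a S
  | jmp l, n => if 1 ≤ l ∧ l ≤ n then S else D
  | halt, _ => S

theorem extract_singleThread (u : PInstr A) (n : ℕ) :
    Extract (u :: List.replicate n halt) (singleThread u n) := by
  have hS : ∀ k, Extract (List.replicate (k + 1) (halt : PInstr A)) S :=
    fun k => Extract.replicate_halt k.succ_ne_zero
  have hJ (k : ℕ) := Extract.jmp_replicate_halt (A := A) 2 k
  match u, n with
  | basic a, 0 => exact Extract.te1 a
  | basic a, k + 1 => exact Extract.te2 a (by simp) (hS k)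
  | ptst a, 0 => exact Extract.te3 a
  | ptst a, 1 => simpa [singleThread] using Extract.te4 a (by simp) (hS 0) (hJ 1)
  | ptst a, k + 2 => simpa [singleThread] using Extract.te4 a (by simp) (hS (k + 1)) (hJ (k + 2))
  | ntst a, 0 => exact Extract.te5 a
  | ntst a, 1 => simpa [singleThread] using Extract.te6 a (by simp) (hS 0) (hJ 1)
  | ntst a, k + 2 => simpa [singleThread] using Extract.te6 a (by simp) (hS (k + 1)) (hJ (k + 2))
  | jmp l, n => exact Extract.jmp_replicate_halt l n
  | halt, 0 => exact Extract.te12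
  | halt, k + 1 => exact Extract.te13 (by simp)

theorem singleThread_injective {u u' : PInstr A}
    (h : ∀ n, singleThread u n = singleThread u' n) : u = u' := by
  cases u <;> cases u'
  case jmp.jmp l l' =>
    have hl := h l
    have hl' := h l'
    simp only [singleThread] at hl hl'
    split_ifs at hl hl' <;> simp at hl hl' ⊢ <;> omega
  all_goals
    have h0 := h 0
    have h1 := h 1
    simp only [singleThread] at h0 h1
    (try split_ifs at h0 h1) <;> simp at h0 h1 ⊢ <;> omega

namespace BCongL

theorem symm {t t' : List (PInstr A)} (h : BCongL t t') : BCongL t' t :=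
  fun l n => (h l n).imp fun _ hb => hb.symm

theorem length_le {t t' : List (PInstr A)} (h : BCongL t t') : t.length ≤ t'.length := by
  by_contra hlt
  obtain ⟨b, hb, hb'⟩ := h (t.length + 1) 1
  have hS : Extract (jmp (t.length + 1) :: (t ++ [halt])) S :=
    Extract.jmp_succ_of_lt (by simp) (by simpa using Extract.te12)
  have hD : Extract (jmp (t.length + 1) :: (t' ++ [halt])) D :=
    Extract.jmp_succ_of_length_le (by simp; omega)
  nomatch (hb.unique hS).symm.trans (hb'.unique hD)

theorem length_eq {t t' : List (PInstr A)} (h : BCongL t t') : t.length = t'.length :=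
  h.length_le.antisymm h.symm.length_le

theorem singleton_inj {u u' : PInstr A} (h : BCongL [u] [u']) : u = u' := by
  refine singleThread_injective fun n => ?_
  obtain ⟨b, hb, hb'⟩ := h 1 n
  have hu := Extract.te9 (by simp) (extract_singleThread u n)
  have hu' := Extract.te9 (by simp) (extract_singleThread u' n)
  exact (hu.unique hb).trans (hb'.unique hu')

end BCongL

end

theorem bcong_shape_general {A : Type} (t t' : List (PInstr A))
    (h : BCongL t t') :
    ((∃ u : PInstr A, t = [u]) ↔ (∃ u' : PInstr A, t' = [u'])) ∧
    ((∃ (u : PInstr A) (s : List (PInstr A)), t = u :: s ∧ s ≠ []) ↔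
      (∃ (u' : PInstr A) (s' : List (PInstr A)), t' = u' :: s' ∧ s' ≠ [])) ∧
    (∀ u : PInstr A, t = [u] → t = t') := by
  have hlen := h.length_eq
  refine ⟨?_, ?_, ?_⟩
  · rw [← List.length_eq_one_iff, ← List.length_eq_one_iff, hlen]
  · rw [List.exists_cons_ne_nil_iff, List.exists_cons_ne_nil_iff, hlen]
  · rintro u rfl
    obtain ⟨u', rfl⟩ := List.length_eq_one_iff.mp hlen.symm
    rw [h.singleton_inj]

/-- For basic repetition-free terms in third canonical form that are
behaviourally congruent: one is a single primitive instruction iff the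
other is, one is a proper concatenation iff the other is, and if one is a
single primitive instruction then they are syntactically identical. -/
theorem bcong_shape {A : Type} (t t' : List (PInstr A))
    (ht : t ≠ []) (ht' : t' ≠ [])
    (hc : ThirdCF t) (hc' : ThirdCF t') (h : BCongL t t') :
    ((∃ u : PInstr A, t = [u]) ↔ (∃ u' : PInstr A, t' = [u'])) ∧
    ((∃ (u : PInstr A) (s : List (PInstr A)), t = u :: s ∧ s ≠ []) ↔
      (∃ (u' : PInstr A) (s' : List (PInstr A)), t' = u' :: s' ∧ s' ≠ [])) ∧
    (∀ u : PInstr A, t = [u] → t = t') :=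
  bcong_shape_general t t' h
end

section
/- Soundness of the behavioural congruence axioms for finite instruction sequences: for all closed repetition-free PGA terms t and t', if t = t' is derivable from axiom PGA1 together with the repetition-free control-flow axioms among PGA5–PGA6 and PGA9–PGA25, then t ≅ t', i.e., for all l, n ∈ ℕ the thread extracted from #l ; t ; !ⁿ equals the thread extracted from #l ; t' ; !ⁿ. -/
open PInstr BTA

/-- Closed repetition-free PGA terms. -/
inductive FTm (A : Type) where
  | ins : PInstr A → FTm A
  | seq : FTm A → FTm A → FTm A

/-- `cat us t` is the term `u₁ ; ⋯ ; uₖ ; t` (right-associated). -/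
def FTm.cat {A : Type} : List (PInstr A) → FTm A → FTm A
  | [], t => t
  | u :: us, t => .seq (.ins u) (FTm.cat us t)

/-- The instruction sequence denoted by a closed repetition-free term. -/
def FTm.flatten {A : Type} : FTm A → List (PInstr A)
  | .ins u => [u]
  | .seq s t => s.flatten ++ t.flatten

/-- Equational derivability from PGA1 together with the repetition-free
control-flow axioms PGA5, PGA6 and PGA9–PGA25 (excluding the repetition
axioms PGA17, PGA18). -/
inductive DerivF {A : Type} : FTm A → FTm A → Prop where
  | refl (t) : DerivF t t
  | symm {t t'} : DerivF t t' → DerivF t' t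
  | trans {t t' t''} : DerivF t t' → DerivF t' t'' → DerivF t t''
  | seqCongr {s s' t t'} : DerivF s s' → DerivF t t' →
      DerivF (.seq s t) (.seq s' t')
  | pga1 (x y z) : DerivF (.seq (.seq x y) z) (.seq x (.seq y z))
  | pga5 (us : List (PInstr A)) :
      DerivF (.cat (jmp (us.length + 1) :: us) (.ins (jmp 0)))
        (.cat (jmp 0 :: us) (.ins (jmp 0)))
  | pga6 (us : List (PInstr A)) (l : ℕ) :
      DerivF (.cat (jmp (us.length + 1) :: us) (.ins (jmp l)))
        (.cat (jmp (l + us.length + 1) :: us) (.ins (jmp l)))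
  | pga9 (a : A) :
      DerivF (.cat [ptst a, jmp 0] (.ins (jmp 0)))
        (.cat [basic a, jmp 0] (.ins (jmp 0)))
  | pga10 (a : A) :
      DerivF (.cat [ntst a, jmp 0] (.ins (jmp 0)))
        (.cat [basic a, jmp 0] (.ins (jmp 0)))
  | pga11 (a : A) :
      DerivF (.seq (.ins (ptst a)) (.ins (jmp 1)))
        (.seq (.ins (basic a)) (.ins (jmp 1)))
  | pga12 (a : A) :
      DerivF (.seq (.ins (ntst a)) (.ins (jmp 1)))
        (.seq (.ins (basic a)) (.ins (jmp 1)))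
  | pga13 (a : A) (l : ℕ) :
      DerivF (.cat [ptst a, jmp (l + 2)] (.ins (jmp (l + 1))))
        (.cat [basic a, jmp (l + 2)] (.ins (jmp (l + 1))))
  | pga14 (a : A) (l : ℕ) :
      DerivF (.cat [ntst a, jmp (l + 2)] (.ins (jmp (l + 1))))
        (.cat [basic a, jmp (l + 2)] (.ins (jmp (l + 1))))
  | pga15 (a : A) :
      DerivF (.cat [ptst a, halt] (.ins halt))
        (.cat [basic a, halt] (.ins halt))
  | pga16 (a : A) :
      DerivF (.cat [ntst a, halt] (.ins halt))
        (.cat [basic a, halt] (.ins halt))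
  | pga19 (a : A) (us : List (PInstr A)) :
      DerivF
        (.cat (jmp (us.length + 3) :: jmp (us.length + 3) ::
          jmp (us.length + 3) :: us) (.ins (ptst a)))
        (.cat (ptst a :: jmp (us.length + 3) :: jmp (us.length + 3) :: us)
          (.ins (ptst a)))
  | pga20 (a : A) (us : List (PInstr A)) :
      DerivF
        (.cat (jmp (us.length + 3) :: jmp (us.length + 3) ::
          jmp (us.length + 3) :: us) (.ins (ntst a)))
        (.cat (ntst a :: jmp (us.length + 3) :: jmp (us.length + 3) :: us)
          (.ins (ntst a)))
  | pga21 (a : A) (us : List (PInstr A)) :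
      DerivF
        (.cat (jmp (us.length + 2) :: jmp (us.length + 2) :: us)
          (.ins (basic a)))
        (.cat (basic a :: jmp (us.length + 2) :: us) (.ins (basic a)))
  | pga22 (a : A) (us vs : List (PInstr A)) :
      DerivF
        (.cat (jmp (us.length + vs.length + 4) :: us ++
          [ptst a, jmp (vs.length + 3), jmp (vs.length + 3)] ++ vs)
          (.ins (ptst a)))
        (.cat (jmp (us.length + 1) :: us ++
          [ptst a, jmp (vs.length + 3), jmp (vs.length + 3)] ++ vs)
          (.ins (ptst a)))
  | pga23 (a : A) (us vs : List (PInstr A)) :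
      DerivF
        (.cat (jmp (us.length + vs.length + 4) :: us ++
          [ntst a, jmp (vs.length + 3), jmp (vs.length + 3)] ++ vs)
          (.ins (ntst a)))
        (.cat (jmp (us.length + 1) :: us ++
          [ntst a, jmp (vs.length + 3), jmp (vs.length + 3)] ++ vs)
          (.ins (ntst a)))
  | pga24 (a : A) (us vs : List (PInstr A)) :
      DerivF
        (.cat (jmp (us.length + vs.length + 3) :: us ++
          [basic a, jmp (vs.length + 2)] ++ vs) (.ins (basic a)))
        (.cat (jmp (us.length + 1) :: us ++
          [basic a, jmp (vs.length + 2)] ++ vs) (.ins (basic a)))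
  | pga25 (us : List (PInstr A)) :
      DerivF (.cat (jmp (us.length + 1) :: us) (.ins halt))
        (.cat (halt :: us) (.ins halt))

/-!
On a non-empty sequence `X`, thread extraction yields `thread X`, obtained by following the
instructions from the first one; `thread (X.drop k)` is the thread from position `k`.
Every axiom instance rewrites only the first instruction `u` of a block `u :: Z`, and both
sides give the same thread from there on. Since all jumps go forward, a jump from a prefix
`P` lands inside `P`, at `u`, or inside `Z`, so `thread (P ++ u :: Z) = thread (P ++ u' :: Z)`
follows by induction on `P`; the congruence rules are then immediate.
-/

section Thread

variable {A : Type}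

@[simp]
def thread : List (PInstr A) → BTA A
  | [] => D
  | basic a :: X => pcc (thread X) a (thread X)
  | ptst a :: X => pcc (thread X) a (thread (X.drop 1))
  | ntst a :: X => pcc (thread (X.drop 1)) a (thread X)
  | jmp 0 :: _ => D
  | jmp (l + 1) :: X => thread (X.drop l)
  | halt :: _ => S
termination_by X => X.length

theorem extract_jmp_succ (l : ℕ) (X : List (PInstr A))
    (h : X.drop l ≠ [] → Extract (X.drop l) (thread (X.drop l))) :
    Extract (jmp (l + 1) :: X) (thread (X.drop l)) := by
  induction l generalizing X with
  | zero =>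
    match X with
    | [] => simpa using .te7 1
    | u :: X => exact .te9 (List.cons_ne_nil u X) (h (List.cons_ne_nil u X))
  | succ l ih =>
    match X with
    | [] => simpa using .te7 (l + 2)
    | [u] => simpa using .te10 l u
    | u :: v :: X => exact .te11 l u (List.cons_ne_nil v X) (ih (v :: X) h)

theorem extract_thread : ∀ X : List (PInstr A), X ≠ [] → Extract X (thread X)
  | [basic a], _ => by simpa using .te1 a
  | basic a :: v :: X, _ => by
    simpa only [thread] using .te2 a (List.cons_ne_nil v X) (extract_thread (v :: X) (by simp))
  | [ptst a], _ => by simpa using .te3 a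
  | ptst a :: v :: X, _ => by
    simpa only [thread] using .te4 a (List.cons_ne_nil v X) (extract_thread (v :: X) (by simp))
      (extract_jmp_succ 1 _ (extract_thread X))
  | [ntst a], _ => by simpa using .te5 a
  | ntst a :: v :: X, _ => by
    simpa only [thread] using .te6 a (List.cons_ne_nil v X) (extract_thread (v :: X) (by simp))
      (extract_jmp_succ 1 _ (extract_thread X))
  | [jmp 0], _ => by simpa using .te7 0
  | jmp 0 :: v :: X, _ => by simpa using .te8 (List.cons_ne_nil v X)
  | jmp (l + 1) :: X, _ => by
    simpa only [thread] using extract_jmp_succ l X (extract_thread (X.drop l))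
  | [halt], _ => by simpa using .te12
  | halt :: v :: X, _ => by simpa using .te13 (List.cons_ne_nil v X)
termination_by X => X.length

theorem thread_cons_congr (v : PInstr A) {W W' : List (PInstr A)}
    (h : ∀ k, thread (W.drop k) = thread (W'.drop k)) :
    thread (v :: W) = thread (v :: W') := by
  have h0 : thread W = thread W' := by simpa using h 0
  rcases v with a | a | a | (_ | l) | _ <;> simp only [thread, h0, h]

theorem thread_append_cons_congr {u u' : PInstr A} {Z : List (PInstr A)}
    (h : thread (u :: Z) = thread (u' :: Z)) :
    ∀ P : List (PInstr A), thread (P ++ u :: Z) = thread (P ++ u' :: Z)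
  | [] => h
  | v :: P => by
    rw [List.cons_append, List.cons_append]
    refine thread_cons_congr v fun k => ?_
    rcases le_or_gt k P.length with hk | hk
    · rw [List.drop_append_of_le_length hk, List.drop_append_of_le_length hk]
      exact thread_append_cons_congr h (P.drop k)
    · obtain ⟨j, rfl⟩ : ∃ j, k = P.length + (j + 1) := ⟨k - P.length - 1, by omega⟩
      rw [List.drop_length_add_append, List.drop_length_add_append]
      rfl
termination_by P => P.length

end Thread

theorem FTm.flatten_cat {A : Type} (us : List (PInstr A)) (t : FTm A) :
    (FTm.cat us t).flatten = us ++ t.flatten := by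
  induction us with
  | nil => rfl
  | cons u us ih => simp [FTm.cat, FTm.flatten, ih]

theorem DerivF.thread_append_eq {A : Type} {t t' : FTm A} (h : DerivF t t')
    (P Y : List (PInstr A)) :
    thread (P ++ t.flatten ++ Y) = thread (P ++ t'.flatten ++ Y) := by
  induction h generalizing P Y with
  | refl => rfl
  | symm _ ih => exact (ih P Y).symm
  | trans _ _ ih₁ ih₂ => exact (ih₁ P Y).trans (ih₂ P Y)
  | seqCongr _ _ ihs iht =>
    simp only [FTm.flatten, List.append_assoc] at ihs iht ⊢
    exact (ihs P _).trans (by simpa using iht (P ++ _) Y)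
  | pga1 => simp only [FTm.flatten, List.append_assoc]
  | pga6 us l =>
    simp only [FTm.flatten_cat, FTm.flatten, List.cons_append, List.append_assoc,
      List.nil_append]
    apply thread_append_cons_congr
    -- `#0` is inaction; `#(l+1)` jumps on and lands where `#(l + k + 2)` does
    cases l <;> simp [List.drop_append, List.drop_of_length_le]
  | _ =>
    simp only [FTm.flatten_cat, FTm.flatten, List.cons_append, List.append_assoc,
      List.nil_append]
    apply thread_append_cons_congr
    -- unfold the jumps before `Nat.add_assoc` reshapes their targets out of the form `l + 1`
    simp only [thread]
    simp [List.drop_append, List.drop_of_length_le, Nat.add_assoc]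

/-- Soundness of the repetition-free behavioural-congruence axioms: if
`t = t'` is derivable, then for all `l, n ∈ ℕ` the threads extracted from
`#l ; t ; !ⁿ` and `#l ; t' ; !ⁿ` coincide. -/
theorem derivF_sound {A : Type} {t t' : FTm A} (h : DerivF t t') :
    ∀ l n : ℕ,
      BEqL (jmp l :: (t.flatten ++ List.replicate n halt))
        (jmp l :: (t'.flatten ++ List.replicate n halt)) := by
  intro l n
  have hthread := h.thread_append_eq [jmp l] (List.replicate n halt)
  simp only [List.cons_append] at hthread
  exact ⟨_, extract_thread _ (List.cons_ne_nil _ _),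
    hthread ▸ extract_thread _ (List.cons_ne_nil _ _)⟩
end

section
/- In BTA with instructions for Boolean registers, the three axioms BTAbr1 (x ◁ f.F/q ▷ y = y ◁ f.T/q ▷ x), BTAbr2 (x ◁ f.I/q ▷ y = y ◁ f.C/q ▷ x), and BTAbr3 (x ◁ f.T/q ▷ y = x ◁ f.p/q ▷ x) are sound for the semantics in which a state is an assignment of Booleans to foci, performing instruction f.p/q in state σ replaces σ(f) by q(σ(f)) and yields reply p(σ(f)), and two threads are identified when, from every initial state, they induce the same state transformations and the same continuation behaviour at every step. -/
/-- The four unary Boolean functions. -/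
def Ffun : Bool → Bool := fun _ => false
def Tfun : Bool → Bool := fun _ => true
def Ifun : Bool → Bool := fun b => b
def Cfun : Bool → Bool := fun b => !b

/-- BTAbr threads over a set `F` of foci: `D`, `S`, and postconditional
composition over basic instructions `f.p/q` (focus `f`, reply function
`p`, update function `q`). -/
inductive Thr (F : Type) where
  | D : Thr F
  | S : Thr F
  | pcc : Thr F → F × (Bool → Bool) × (Bool → Bool) → Thr F → Thr F

/-- Executions: inaction, termination, or a step producing a new state. -/
inductive Run (St : Type) where
  | dead : Run St
  | term : Run St
  | step : St → Run St → Run St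

/-- The execution induced by a thread from a state: `D` gives inaction,
`S` gives termination, and `x ◁ f.p/q ▷ y` in state `σ` updates `σ f` to
`q (σ f)` and continues with `x` if `p (σ f) = true`, with `y`
otherwise. -/
def beh {F : Type} [DecidableEq F] : Thr F → (F → Bool) → Run (F → Bool)
  | .D, _ => .dead
  | .S, _ => .term
  | .pcc x (f, p, q) y, σ =>
      let σ' := Function.update σ f (q (σ f))
      .step σ' (if p (σ f) then beh x σ' else beh y σ')

/-- Semantic equality of threads: identical executions from every initial
state. -/
def SemEq {F : Type} [DecidableEq F] (x y : Thr F) : Prop :=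
  ∀ σ : F → Bool, beh x σ = beh y σ

section

variable {F : Type} [DecidableEq F] (x y : Thr F) (f : F) {p p' : Bool → Bool} (q : Bool → Bool)

theorem beh_pcc (p : Bool → Bool) (σ : F → Bool) :
    beh (.pcc x (f, p, q) y) σ =
      .step (Function.update σ f (q (σ f)))
        (if p (σ f) then beh x (Function.update σ f (q (σ f)))
          else beh y (Function.update σ f (q (σ f)))) :=
  rfl

theorem semEq_pcc_swap_of_reply_eq_not (hp : ∀ b, p' b = !p b) :
    SemEq (.pcc x (f, p, q) y) (.pcc y (f, p', q) x) := by
  intro σ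
  simp only [beh_pcc, hp]
  cases p (σ f) <;> rfl

theorem semEq_pcc_of_reply_eq_true (hp : ∀ b, p b = true) (p' : Bool → Bool) :
    SemEq (.pcc x (f, p, q) y) (.pcc x (f, p', q) x) := by
  intro σ
  simp only [beh_pcc, hp, if_true, ite_self]

end

/-- Soundness of the axioms BTAbr1–BTAbr3 for the Boolean-register
semantics. -/
theorem btabr_axioms_sound {F : Type} [DecidableEq F]
    (x y : Thr F) (f : F) (q : Bool → Bool) :
    SemEq (.pcc x (f, Ffun, q) y) (.pcc y (f, Tfun, q) x) ∧
    SemEq (.pcc x (f, Ifun, q) y) (.pcc y (f, Cfun, q) x) ∧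
    (∀ p : Bool → Bool, SemEq (.pcc x (f, Tfun, q) y) (.pcc x (f, p, q) x)) :=
  ⟨semEq_pcc_swap_of_reply_eq_not x y f q fun _ => rfl,
    semEq_pcc_swap_of_reply_eq_not x y f q fun _ => rfl,
    semEq_pcc_of_reply_eq_true x y f q fun _ => rfl⟩
end
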